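/- arXiv:2511.13816 — 5 statements merged into one kernel-verified Lean document; each statement's English description precedes it below -/
import Mathlib

section
/- Fix a real y > 0. Then 2 k^{1/2−2k} π^{2k−1/2} e^{2k} · ∑_{n ≥ ⌈2(k/(πy))²⌉} n^{2k} e^{−2πyn} tends to 0 as k → ∞, where the sum runs over integers n. -/
open Filter Real

/-- Ratio bound: each term of the tail is at most `exp(-πy)` times the previous one. -/
lemma tail_ratio (y : ℝ) (hy : 0 < y) (k N : ℕ) (hN : 1 ≤ N)
    (hkN : 2 * (k : ℝ) ≤ Real.pi * y * N) (m : ℕ) (hm : N ≤ m) :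
    ((m + 1 : ℕ) : ℝ) ^ (2 * k) * Real.exp (-2 * Real.pi * y * ((m + 1 : ℕ) : ℝ)) ≤
      Real.exp (-(Real.pi * y)) *
        ((m : ℝ) ^ (2 * k) * Real.exp (-2 * Real.pi * y * (m : ℝ))) := by
  have hπy : 0 < Real.pi * y := mul_pos Real.pi_pos hy
  have hm0 : (0 : ℝ) < m := by exact_mod_cast lt_of_lt_of_le hN hm
  have hNm : (N : ℝ) ≤ m := by exact_mod_cast hm
  have hb : ((m : ℝ) + 1) ≤ (m : ℝ) * Real.exp (1 / m) := by
    have h := Real.add_one_le_exp (1 / (m : ℝ))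
    have : (m : ℝ) * (1 / m + 1) ≤ (m : ℝ) * Real.exp (1 / m) :=
      mul_le_mul_of_nonneg_left h hm0.le
    calc (m : ℝ) + 1 = (m : ℝ) * (1 / m + 1) := by field_simp; ring
      _ ≤ _ := this
  have h1 : ((m : ℝ) + 1) ^ (2 * k) ≤ ((m : ℝ) * Real.exp (1 / m)) ^ (2 * k) :=
    pow_le_pow_left₀ (by positivity) hb _
  have h2 : ((m : ℝ) * Real.exp (1 / m)) ^ (2 * k) =
      (m : ℝ) ^ (2 * k) * Real.exp ((2 * k : ℕ) * (1 / m)) := by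
    rw [mul_pow, ← Real.exp_nat_mul]
  have h3 : Real.exp ((2 * k : ℕ) * (1 / (m : ℝ))) ≤ Real.exp (Real.pi * y) := by
    apply Real.exp_le_exp.mpr
    rw [mul_one_div, div_le_iff₀ hm0]
    have : Real.pi * y * N ≤ Real.pi * y * m := mul_le_mul_of_nonneg_left hNm hπy.le
    push_cast
    linarith
  have key : ((m : ℝ) + 1) ^ (2 * k) ≤ (m : ℝ) ^ (2 * k) * Real.exp (Real.pi * y) := by
    calc ((m : ℝ) + 1) ^ (2 * k) ≤ (m : ℝ) ^ (2 * k) * Real.exp ((2 * k : ℕ) * (1 / m)) := by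
          rw [← h2]; exact h1
      _ ≤ (m : ℝ) ^ (2 * k) * Real.exp (Real.pi * y) :=
          mul_le_mul_of_nonneg_left h3 (by positivity)
  have hexp : Real.exp (Real.pi * y) * Real.exp (-2 * Real.pi * y * ((m : ℝ) + 1)) =
      Real.exp (-(Real.pi * y)) * Real.exp (-2 * Real.pi * y * (m : ℝ)) := by
    rw [← Real.exp_add, ← Real.exp_add]
    congr 1
    ring
  have hepos : (0 : ℝ) ≤ Real.exp (-2 * Real.pi * y * ((m : ℝ) + 1)) := (Real.exp_pos _).le
  calc ((m + 1 : ℕ) : ℝ) ^ (2 * k) * Real.exp (-2 * Real.pi * y * ((m + 1 : ℕ) : ℝ))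
      = ((m : ℝ) + 1) ^ (2 * k) * Real.exp (-2 * Real.pi * y * ((m : ℝ) + 1)) := by push_cast; ring
    _ ≤ ((m : ℝ) ^ (2 * k) * Real.exp (Real.pi * y)) *
          Real.exp (-2 * Real.pi * y * ((m : ℝ) + 1)) :=
        mul_le_mul_of_nonneg_right key hepos
    _ = (m : ℝ) ^ (2 * k) *
          (Real.exp (Real.pi * y) * Real.exp (-2 * Real.pi * y * ((m : ℝ) + 1))) := by ring
    _ = Real.exp (-(Real.pi * y)) * ((m : ℝ) ^ (2 * k) * Real.exp (-2 * Real.pi * y * (m : ℝ))) := by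
        rw [hexp]; ring

/-- Geometric domination of the tail terms. -/
lemma tail_geom (y : ℝ) (hy : 0 < y) (k N : ℕ) (hN : 1 ≤ N)
    (hkN : 2 * (k : ℝ) ≤ Real.pi * y * N) (n : ℕ) :
    ((n + N : ℕ) : ℝ) ^ (2 * k) * Real.exp (-2 * Real.pi * y * ((n + N : ℕ) : ℝ)) ≤
      ((N : ℝ) ^ (2 * k) * Real.exp (-2 * Real.pi * y * (N : ℝ))) *
        Real.exp (-(Real.pi * y)) ^ n := by
  induction n with
  | zero => simp
  | succ n ih =>
      have h := tail_ratio y hy k N hN hkN (n + N) (Nat.le_add_left _ _)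
      have hrw : n + 1 + N = (n + N) + 1 := by omega
      rw [hrw]
      calc ((n + N + 1 : ℕ) : ℝ) ^ (2 * k) * Real.exp (-2 * Real.pi * y * ((n + N + 1 : ℕ) : ℝ))
          ≤ Real.exp (-(Real.pi * y)) *
              (((n + N : ℕ) : ℝ) ^ (2 * k) * Real.exp (-2 * Real.pi * y * ((n + N : ℕ) : ℝ))) := h
        _ ≤ Real.exp (-(Real.pi * y)) *
              (((N : ℝ) ^ (2 * k) * Real.exp (-2 * Real.pi * y * (N : ℝ))) *
                Real.exp (-(Real.pi * y)) ^ n) :=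
            mul_le_mul_of_nonneg_left ih (Real.exp_pos _).le
        _ = ((N : ℝ) ^ (2 * k) * Real.exp (-2 * Real.pi * y * (N : ℝ))) *
              Real.exp (-(Real.pi * y)) ^ (n + 1) := by ring


set_option maxHeartbeats 1000000 in
/-- The key quantitative bound for large `k`. -/
lemma main_bound (y : ℝ) (hy : 0 < y) (k : ℕ) (hk1 : 1 ≤ k) (hk2 : Real.pi * y ≤ k)
    (hsmall : 3 * Real.exp 1 / (Real.pi * y ^ 2) * k *
        Real.exp (-(2 / (Real.pi * y)) * k) ≤ 1 / 2) :
    2 * (k : ℝ) ^ ((1 : ℝ) / 2 - 2 * (k : ℝ)) * Real.pi ^ (2 * (k : ℝ) - 1 / 2) *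
        Real.exp (2 * (k : ℝ)) *
        ∑' n : ℕ, ((n + ⌈2 * ((k : ℝ) / (Real.pi * y)) ^ 2⌉₊ : ℕ) : ℝ) ^ (2 * k) *
          Real.exp (-2 * Real.pi * y * ((n + ⌈2 * ((k : ℝ) / (Real.pi * y)) ^ 2⌉₊ : ℕ) : ℝ))
      ≤ 2 / Real.sqrt Real.pi * (1 - Real.exp (-(Real.pi * y)))⁻¹ * ((k : ℝ) * (1 / 4) ^ k) := by
  have hπ := Real.pi_pos
  have hπy : 0 < Real.pi * y := mul_pos hπ hy
  have hk0 : (0 : ℝ) < k := by exact_mod_cast hk1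
  set x : ℝ := 2 * ((k : ℝ) / (Real.pi * y)) ^ 2 with hxdef
  set N : ℕ := ⌈x⌉₊ with hNdef
  have hq1 : 1 ≤ (k : ℝ) / (Real.pi * y) := (one_le_div hπy).mpr hk2
  have hx2 : 2 ≤ x := by nlinarith
  have hxN : x ≤ N := Nat.le_ceil x
  have hN1 : 1 ≤ N := Nat.ceil_pos.mpr (by linarith)
  have hNlt : (N : ℝ) < x + 1 := Nat.ceil_lt_add_one (by linarith)
  have hNle : (N : ℝ) ≤ 3 / 2 * x := by linarith
  have hπyx : Real.pi * y * x = 2 * (k : ℝ) ^ 2 / (Real.pi * y) := by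
    rw [hxdef]
    field_simp
  have hπyN : 2 * (k : ℝ) ^ 2 / (Real.pi * y) ≤ Real.pi * y * N := by
    have h1 : Real.pi * y * x ≤ Real.pi * y * N := mul_le_mul_of_nonneg_left hxN hπy.le
    linarith [hπyx]
  have hkN : 2 * (k : ℝ) ≤ Real.pi * y * N := by
    have h2 : 2 * (k : ℝ) ≤ 2 * (k : ℝ) ^ 2 / (Real.pi * y) := by
      rw [le_div_iff₀ hπy]
      nlinarith
    linarith
  -- geometric data
  set r : ℝ := Real.exp (-(Real.pi * y)) with hrdef
  have hr0 : (0 : ℝ) ≤ r := (Real.exp_pos _).le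
  have hr1 : r < 1 := by
    rw [hrdef, Real.exp_lt_one_iff]
    linarith
  set t0 : ℝ := (N : ℝ) ^ (2 * k) * Real.exp (-2 * Real.pi * y * (N : ℝ)) with ht0
  have ht00 : 0 ≤ t0 := by positivity
  have hgeom : ∀ n : ℕ,
      ((n + N : ℕ) : ℝ) ^ (2 * k) * Real.exp (-2 * Real.pi * y * ((n + N : ℕ) : ℝ)) ≤ t0 * r ^ n :=
    fun n => tail_geom y hy k N hN1 hkN n
  have hsumg : Summable (fun n : ℕ => t0 * r ^ n) :=
    (summable_geometric_of_lt_one hr0 hr1).mul_left t0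
  have hsum : Summable (fun n : ℕ =>
      ((n + N : ℕ) : ℝ) ^ (2 * k) * Real.exp (-2 * Real.pi * y * ((n + N : ℕ) : ℝ))) :=
    Summable.of_nonneg_of_le (fun n => by positivity) hgeom hsumg
  have hS : (∑' n : ℕ,
      ((n + N : ℕ) : ℝ) ^ (2 * k) * Real.exp (-2 * Real.pi * y * ((n + N : ℕ) : ℝ)))
        ≤ t0 * (1 - r)⁻¹ := by
    calc (∑' n : ℕ, ((n + N : ℕ) : ℝ) ^ (2 * k) *
            Real.exp (-2 * Real.pi * y * ((n + N : ℕ) : ℝ)))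
        ≤ ∑' n : ℕ, t0 * r ^ n := Summable.tsum_le_tsum hgeom hsum hsumg
      _ = t0 * (1 - r)⁻¹ := by rw [tsum_mul_left, tsum_geometric_of_lt_one hr0 hr1]
  set A : ℝ := 2 * (k : ℝ) ^ ((1 : ℝ) / 2 - 2 * (k : ℝ)) * Real.pi ^ (2 * (k : ℝ) - 1 / 2) *
    Real.exp (2 * (k : ℝ)) with hAdef
  have hA0 : 0 ≤ A := by
    rw [hAdef]
    positivity
  have step1 : A * (∑' n : ℕ, ((n + N : ℕ) : ℝ) ^ (2 * k) *
      Real.exp (-2 * Real.pi * y * ((n + N : ℕ) : ℝ))) ≤ A * (t0 * (1 - r)⁻¹) :=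
    mul_le_mul_of_nonneg_left hS hA0
  -- rewrite A * t0
  have hrpk : (k : ℝ) ^ ((1 : ℝ) / 2 - 2 * (k : ℝ)) =
      Real.sqrt k * ((k : ℝ) ^ (2 * k))⁻¹ := by
    rw [sub_eq_add_neg, Real.rpow_add hk0, Real.rpow_neg hk0.le]
    congr 1
    · rw [Real.sqrt_eq_rpow]
    · rw [show (2 : ℝ) * (k : ℝ) = ((2 * k : ℕ) : ℝ) by push_cast; ring, Real.rpow_natCast]
  have hrpπ : Real.pi ^ (2 * (k : ℝ) - 1 / 2) =
      Real.pi ^ (2 * k) * (Real.sqrt Real.pi)⁻¹ := by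
    rw [sub_eq_add_neg, Real.rpow_add hπ, Real.rpow_neg hπ.le]
    congr 1
    · rw [show (2 : ℝ) * (k : ℝ) = ((2 * k : ℕ) : ℝ) by push_cast; ring, Real.rpow_natCast]
    · rw [Real.sqrt_eq_rpow]
  have hexpk : Real.exp (2 * (k : ℝ)) = Real.exp 1 ^ (2 * k) := by
    rw [← Real.exp_nat_mul]
    congr 1
    push_cast
    ring
  have hAt0 : A * t0 = 2 / Real.sqrt Real.pi * Real.sqrt k *
      ((Real.pi * N * Real.exp 1 / k) ^ (2 * k) * Real.exp (-2 * Real.pi * y * (N : ℝ))) := by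
    rw [hAdef, ht0, hrpk, hrpπ, hexpk, div_pow, mul_pow, mul_pow]
    have hkpow : ((k : ℝ)) ^ (2 * k) ≠ 0 := by positivity
    field_simp
  -- bound the bracket
  set c : ℝ := 3 * Real.exp 1 / (Real.pi * y ^ 2) with hcdef
  set b : ℝ := 2 / (Real.pi * y) with hbdef
  have hc0 : 0 < c := by rw [hcdef]; positivity
  have hxsq : x * (Real.pi * y) ^ 2 = 2 * (k : ℝ) ^ 2 := by
    rw [hxdef]
    field_simp
  have h3 : (N : ℝ) * (Real.pi * y) ^ 2 ≤ 3 * (k : ℝ) ^ 2 := by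
    nlinarith [mul_le_mul_of_nonneg_right hNle (sq_nonneg (Real.pi * y))]
  have hbase : Real.pi * N * Real.exp 1 / k ≤ c * k := by
    have hden : 0 < Real.pi * y ^ 2 := by positivity
    rw [div_le_iff₀ hk0]
    have expand : c * (k : ℝ) * (k : ℝ) =
        3 * Real.exp 1 * (k : ℝ) * (k : ℝ) / (Real.pi * y ^ 2) := by
      rw [hcdef]; ring
    rw [expand, le_div_iff₀ hden]
    nlinarith [mul_le_mul_of_nonneg_right h3 (Real.exp_pos 1).le]
  have hexpb : Real.exp (-2 * Real.pi * y * (N : ℝ)) ≤ Real.exp (-b * k) ^ (2 * k) := by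
    rw [← Real.exp_nat_mul, Real.exp_le_exp]
    have h2 : ((2 * k : ℕ) : ℝ) * (-b * k) = -(2 * (2 * (k : ℝ) ^ 2 / (Real.pi * y))) := by
      rw [hbdef]
      push_cast
      field_simp
    rw [h2]
    linarith [hπyN]
  have hbr : (Real.pi * N * Real.exp 1 / k) ^ (2 * k) * Real.exp (-2 * Real.pi * y * (N : ℝ))
      ≤ (1 / 4 : ℝ) ^ k := by
    have hb1 : (Real.pi * N * Real.exp 1 / k) ^ (2 * k) ≤ (c * k) ^ (2 * k) :=
      pow_le_pow_left₀ (by positivity) hbase _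
    have hcomb : (Real.pi * N * Real.exp 1 / k) ^ (2 * k) *
        Real.exp (-2 * Real.pi * y * (N : ℝ)) ≤ (c * k * Real.exp (-b * k)) ^ (2 * k) := by
      rw [mul_pow]
      exact mul_le_mul hb1 hexpb (Real.exp_pos _).le (by positivity)
    have hhalf : (c * k * Real.exp (-b * k)) ^ (2 * k) ≤ (1 / 2 : ℝ) ^ (2 * k) :=
      pow_le_pow_left₀ (by positivity) hsmall _
    calc (Real.pi * N * Real.exp 1 / k) ^ (2 * k) * Real.exp (-2 * Real.pi * y * (N : ℝ))
        ≤ (1 / 2 : ℝ) ^ (2 * k) := hcomb.trans hhalf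
      _ = (1 / 4 : ℝ) ^ k := by rw [pow_mul]; norm_num
  have hsk : Real.sqrt k ≤ (k : ℝ) := by
    rw [Real.sqrt_le_iff]
    constructor
    · exact hk0.le
    · nlinarith [mul_le_mul_of_nonneg_left (show (1:ℝ) ≤ (k:ℝ) from by exact_mod_cast hk1) hk0.le]
  have hinv0 : (0 : ℝ) ≤ (1 - r)⁻¹ := by
    have : 0 < 1 - r := by linarith
    positivity
  have final : A * (t0 * (1 - r)⁻¹) ≤
      2 / Real.sqrt Real.pi * (1 - r)⁻¹ * ((k : ℝ) * (1 / 4) ^ k) := by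
    have e1 : A * (t0 * (1 - r)⁻¹) = (A * t0) * (1 - r)⁻¹ := by ring
    rw [e1, hAt0]
    have h0 : (0 : ℝ) ≤ 2 / Real.sqrt Real.pi := by positivity
    have step : Real.sqrt k * ((Real.pi * N * Real.exp 1 / k) ^ (2 * k) *
        Real.exp (-2 * Real.pi * y * (N : ℝ))) ≤ (k : ℝ) * (1 / 4) ^ k :=
      mul_le_mul hsk hbr (by positivity) hk0.le
    calc 2 / Real.sqrt Real.pi * Real.sqrt k *
          ((Real.pi * N * Real.exp 1 / k) ^ (2 * k) *
            Real.exp (-2 * Real.pi * y * (N : ℝ))) * (1 - r)⁻¹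
        = 2 / Real.sqrt Real.pi * (Real.sqrt k *
            ((Real.pi * N * Real.exp 1 / k) ^ (2 * k) *
              Real.exp (-2 * Real.pi * y * (N : ℝ)))) * (1 - r)⁻¹ := by ring
      _ ≤ 2 / Real.sqrt Real.pi * ((k : ℝ) * (1 / 4) ^ k) * (1 - r)⁻¹ :=
          mul_le_mul_of_nonneg_right (mul_le_mul_of_nonneg_left step h0) hinv0
      _ = 2 / Real.sqrt Real.pi * (1 - r)⁻¹ * ((k : ℝ) * (1 / 4) ^ k) := by ring
  calc A * (∑' n : ℕ, ((n + N : ℕ) : ℝ) ^ (2 * k) *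
        Real.exp (-2 * Real.pi * y * ((n + N : ℕ) : ℝ)))
      ≤ A * (t0 * (1 - r)⁻¹) := step1
    _ ≤ _ := final

/-- Fix a real `y > 0`.  Then
`2 k^{1/2−2k} π^{2k−1/2} e^{2k} · ∑_{n ≥ ⌈2(k/(πy))²⌉} n^{2k} e^{−2πyn} → 0` as `k → ∞`,
the sum running over integers `n ≥ ⌈2(k/(πy))²⌉`. -/
theorem tail_tendsto_zero (y : ℝ) (hy : 0 < y) :
    Tendsto (fun k : ℕ =>
      2 * (k : ℝ) ^ ((1 : ℝ) / 2 - 2 * (k : ℝ)) * Real.pi ^ (2 * (k : ℝ) - 1 / 2) *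
        Real.exp (2 * (k : ℝ)) *
        ∑' n : ℕ, ((n + ⌈2 * ((k : ℝ) / (Real.pi * y)) ^ 2⌉₊ : ℕ) : ℝ) ^ (2 * k) *
          Real.exp (-2 * Real.pi * y * ((n + ⌈2 * ((k : ℝ) / (Real.pi * y)) ^ 2⌉₊ : ℕ) : ℝ)))
      atTop (nhds 0) := by
  have hπ := Real.pi_pos
  have hπy : 0 < Real.pi * y := mul_pos hπ hy
  have hb0 : 0 < 2 / (Real.pi * y) := by positivity
  have hsm : Tendsto (fun k : ℕ => 3 * Real.exp 1 / (Real.pi * y ^ 2) * k *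
      Real.exp (-(2 / (Real.pi * y)) * k)) atTop (nhds 0) := by
    have h1 : Tendsto (fun t : ℝ => t ^ 1 * Real.exp (-t)) atTop (nhds 0) :=
      tendsto_pow_mul_exp_neg_atTop_nhds_zero 1
    have h2 : Tendsto (fun k : ℕ => 2 / (Real.pi * y) * k) atTop atTop :=
      Tendsto.const_mul_atTop hb0 tendsto_natCast_atTop_atTop
    have h3 := (h1.comp h2).const_mul
      (3 * Real.exp 1 / (Real.pi * y ^ 2) * (Real.pi * y / 2))
    rw [mul_zero] at h3
    apply h3.congr
    intro k
    simp only [Function.comp_apply, pow_one]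
    rw [show -(2 / (Real.pi * y) * (k : ℝ)) = -(2 / (Real.pi * y)) * (k : ℝ) from by ring]
    field_simp
  have hev1 : ∀ᶠ k : ℕ in atTop, 3 * Real.exp 1 / (Real.pi * y ^ 2) * k *
      Real.exp (-(2 / (Real.pi * y)) * k) ≤ 1 / 2 :=
    hsm.eventually_le_const (by norm_num)
  have hev2 : ∀ᶠ k : ℕ in atTop, Real.pi * y ≤ (k : ℝ) := by
    filter_upwards [eventually_ge_atTop ⌈Real.pi * y⌉₊] with k hk
    calc Real.pi * y ≤ (⌈Real.pi * y⌉₊ : ℝ) := Nat.le_ceil _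
      _ ≤ (k : ℝ) := by exact_mod_cast hk
  have hev3 : ∀ᶠ k : ℕ in atTop, 1 ≤ k := eventually_ge_atTop 1
  refine squeeze_zero' (g := fun k : ℕ => 2 / Real.sqrt Real.pi *
    (1 - Real.exp (-(Real.pi * y)))⁻¹ * ((k : ℝ) * (1 / 4 : ℝ) ^ k)) ?_ ?_ ?_
  · filter_upwards with k
    have h1 : 0 ≤ ∑' n : ℕ, ((n + ⌈2 * ((k : ℝ) / (Real.pi * y)) ^ 2⌉₊ : ℕ) : ℝ) ^ (2 * k) *
        Real.exp (-2 * Real.pi * y * ((n + ⌈2 * ((k : ℝ) / (Real.pi * y)) ^ 2⌉₊ : ℕ) : ℝ)) :=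
      tsum_nonneg (fun n => by positivity)
    have h2 : (0 : ℝ) ≤ 2 * (k : ℝ) ^ ((1 : ℝ) / 2 - 2 * (k : ℝ)) *
        Real.pi ^ (2 * (k : ℝ) - 1 / 2) * Real.exp (2 * (k : ℝ)) := by positivity
    exact mul_nonneg h2 h1
  · filter_upwards [hev1, hev2, hev3] with k h1 h2 h3
    exact main_bound y hy k h3 h2 h1
  · have hsum4 : Tendsto (fun k : ℕ => (k : ℝ) * (1 / 4 : ℝ) ^ k) atTop (nhds 0) := by
      have h := (summable_pow_mul_geometric_of_norm_lt_one (R := ℝ) 1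
        (r := (1 / 4 : ℝ)) (by rw [Real.norm_eq_abs, abs_of_nonneg (by norm_num : (0:ℝ) ≤ 1/4)]; norm_num)).tendsto_atTop_zero
      apply h.congr
      intro k
      rw [pow_one]
    have h := hsum4.const_mul (2 / Real.sqrt Real.pi * (1 - Real.exp (-(Real.pi * y)))⁻¹)
    rw [mul_zero] at h
    exact h
end

section
/- Fix a real y > 0.729. Suppose for each even integer k ≥ 12 we are given b_k : ℕ → ℝ satisfying |b_k(n)| ≤ 2 C_k n^{k/2} for all n ≥ 1, where C_k = ((2π)^k/(k−1)!) · e^{28.466} · √((k/12)·log k) · (1.0242382·k/12)^{k/2}. Then ∑_{n=1}^∞ b_k(n) e^{−2πny} tends to 0 as k → ∞ (k even). -/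
/-!
Write `e^{-2πny} = e^{-2π·0.729·n} · e^{-2π(y-0.729)n}`. The bound `x^s e^{-ax} ≤ (s/(ae))^s`
absorbs `n^{k/2}` into the first factor, leaving a geometric series in the second, so the sum is
`O(C_k (k/(4π·0.729·e))^{k/2})`. With `(k-1)! ≥ (k/e)^k / k` this is `O(k² q^{k/2})` for
`q = 1.0242382·π·e / (12·0.729) < 1`.
-/

open Filter Real

/-- The constant
`C_k = ((2π)^k/(k−1)!) · e^{28.466} · √((k/12)·log k) · (1.0242382·k/12)^{k/2}`. -/
noncomputable def Ck (k : ℕ) : ℝ :=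
  ((2 * Real.pi) ^ k / (Nat.factorial (k - 1) : ℝ)) * Real.exp 28.466 *
    Real.sqrt (((k : ℝ) / 12) * Real.log k) *
    (1.0242382 * (k : ℝ) / 12) ^ ((k : ℝ) / 2)

theorem rpow_mul_exp_neg_mul_le {x s a : ℝ} (hx : 0 ≤ x) (hs : 0 < s) (ha : 0 < a) :
    x ^ s * exp (-(a * x)) ≤ (s / (a * exp 1)) ^ s := by
  have hlin : a * x / s ≤ exp (a * x / s - 1) := by linarith [add_one_le_exp (a * x / s - 1)]
  have hpow : (a * x / s) ^ s ≤ exp (a * x - s) :=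
    calc (a * x / s) ^ s ≤ exp (a * x / s - 1) ^ s := rpow_le_rpow (by positivity) hlin hs.le
      _ = exp (a * x - s) := by rw [← exp_mul]; congr 1; field_simp
  calc x ^ s * exp (-(a * x)) = (s / a) ^ s * (a * x / s) ^ s * exp (-(a * x)) := by
        rw [← mul_rpow (by positivity) (by positivity)]; congr 3; field_simp
    _ ≤ (s / a) ^ s * exp (a * x - s) * exp (-(a * x)) := by gcongr
    _ = (s / a) ^ s / exp 1 ^ s := by
        rw [exp_one_rpow, mul_assoc, ← exp_add, show a * x - s + -(a * x) = -s by ring, exp_neg,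
          ← div_eq_mul_inv]
    _ = (s / (a * exp 1)) ^ s := by rw [← div_rpow (by positivity) (by positivity), div_div]

theorem div_factorial_pred_le {c : ℝ} (hc : 0 ≤ c) {k : ℕ} (hk : k ≠ 0) :
    c ^ k / (k - 1).factorial ≤ k * (c * exp 1 / k) ^ k := by
  have hk0 : (0 : ℝ) < k := by positivity
  calc c ^ k / (k - 1).factorial = k * (c / k) ^ k * ((k : ℝ) ^ k / k.factorial) := by
        rw [← Nat.mul_factorial_pred hk, div_pow]; push_cast; field_simp
    _ ≤ k * (c / k) ^ k * exp k := by gcongr; exact pow_div_factorial_le_exp _ hk0.le k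
    _ = k * (c * exp 1 / k) ^ k := by rw [← exp_one_pow]; ring

theorem norm_tsum_mul_exp_neg_le {A s y₀ y : ℝ} (B : ℕ → ℝ) (hs : 0 < s) (hy₀ : 0 < y₀)
    (hy : y₀ < y) (hB : ∀ n : ℕ, 1 ≤ n → |B n| ≤ A * (n : ℝ) ^ s) :
    ‖∑' n : ℕ, B (n + 1) * exp (-2 * π * ((n : ℝ) + 1) * y)‖ ≤
      A * (s / (2 * π * y₀ * exp 1)) ^ s * (1 - exp (-(2 * π * (y - y₀))))⁻¹ := by
  set r := exp (-(2 * π * (y - y₀)))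
  have hr : r < 1 := exp_lt_one_iff.2 (by nlinarith [pi_pos])
  have hA : 0 ≤ A := by simpa using (abs_nonneg _).trans (hB 1 le_rfl)
  refine tsum_of_norm_bounded ((hasSum_geometric_of_lt_one (exp_pos _).le hr).mul_left _)
    fun n => ?_
  set x : ℝ := n + 1 with hx
  have hsplit : exp (-2 * π * x * y) = exp (-(2 * π * y₀ * x)) * r ^ (n + 1) := by
    rw [← exp_nat_mul, ← exp_add, hx]; congr 1; push_cast; ring
  calc ‖B (n + 1) * exp (-2 * π * x * y)‖ = |B (n + 1)| * exp (-2 * π * x * y) := by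
        rw [norm_mul, norm_eq_abs, norm_of_nonneg (exp_pos _).le]
    _ ≤ A * x ^ s * (exp (-(2 * π * y₀ * x)) * r ^ (n + 1)) := by
        have hBn := hB (n + 1) (by omega)
        push_cast at hBn
        rw [hsplit]; gcongr
    _ = A * (x ^ s * exp (-(2 * π * y₀ * x))) * r ^ (n + 1) := by ring
    _ ≤ A * (s / (2 * π * y₀ * exp 1)) ^ s * r ^ n := by
        refine mul_le_mul (mul_le_mul_of_nonneg_left ?_ hA)
          (pow_le_pow_of_le_one (exp_pos _).le hr.le n.le_succ) (by positivity) (by positivity)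
        exact rpow_mul_exp_neg_mul_le (by positivity) hs (by positivity)

theorem Ck_mul_rpow_le {y₀ : ℝ} (hy₀ : 0 < y₀) {k : ℕ} (hk : 1 ≤ k) :
    Ck k * ((k / 2) / (2 * π * y₀ * exp 1)) ^ ((k : ℝ) / 2) ≤
      exp 28.466 * ((k : ℝ) ^ 2 * √(1.0242382 * π * exp 1 / (12 * y₀)) ^ k) := by
  set u : ℝ := k / 2
  have hk0 : (0 : ℝ) < k := by exact_mod_cast hk
  have hpow : ∀ x : ℝ, 0 ≤ x → x ^ k = (x ^ 2) ^ u := fun x hx => by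
    rw [← rpow_natCast, ← rpow_natCast, ← rpow_mul hx]; congr 1; simp only [u]; push_cast; ring
  have hfac : (2 * π) ^ k / (k - 1).factorial ≤ k * ((2 * π * exp 1 / k) ^ 2) ^ u := by
    rw [← hpow _ (by positivity)]; exact div_factorial_pred_le (by positivity) (by omega)
  have hsqrt : √((k / 12) * log k) ≤ k := by
    refine sqrt_le_iff.2 ⟨hk0.le, ?_⟩
    have := log_le_sub_one_of_pos hk0
    have := log_nonneg (show (1 : ℝ) ≤ k by exact_mod_cast hk)
    nlinarith
  have hbase : ((2 * π * exp 1 / k) ^ 2) ^ u * (1.0242382 * k / 12) ^ u *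
      (u / (2 * π * y₀ * exp 1)) ^ u = √(1.0242382 * π * exp 1 / (12 * y₀)) ^ k := by
    rw [← mul_rpow (by positivity) (by positivity), ← mul_rpow (by positivity) (by positivity),
      hpow _ (sqrt_nonneg _), sq_sqrt (by positivity)]
    congr 1; field_simp; ring
  calc Ck k * (u / (2 * π * y₀ * exp 1)) ^ u
      = (2 * π) ^ k / (k - 1).factorial * exp 28.466 * √((k / 12) * log k) *
          ((1.0242382 * k / 12) ^ u * (u / (2 * π * y₀ * exp 1)) ^ u) := by
        unfold Ck; ring
    _ ≤ k * ((2 * π * exp 1 / k) ^ 2) ^ u * exp 28.466 * k *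
          ((1.0242382 * k / 12) ^ u * (u / (2 * π * y₀ * exp 1)) ^ u) := by
        gcongr
    _ = exp 28.466 * ((k : ℝ) ^ 2 * √(1.0242382 * π * exp 1 / (12 * y₀)) ^ k) := by
        rw [← hbase]; ring

/-- Fix a real `y > 0.729`.  If for each even `k ≥ 12` the coefficients `b_k : ℕ → ℝ`
satisfy `|b_k(n)| ≤ 2 C_k n^{k/2}` for all `n ≥ 1`, then `∑_{n=1}^∞ b_k(n) e^{−2πny} → 0`
as `k → ∞` over even `k`. -/
theorem cusp_contribution_tendsto_zero (y : ℝ) (hy : 0.729 < y) (b : ℕ → ℕ → ℝ)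
    (hb : ∀ k : ℕ, Even k → 12 ≤ k → ∀ n : ℕ, 1 ≤ n →
      |b k n| ≤ 2 * Ck k * (n : ℝ) ^ ((k : ℝ) / 2)) :
    Tendsto (fun k : ℕ => ∑' n : ℕ, b k (n + 1) * Real.exp (-2 * Real.pi * ((n : ℝ) + 1) * y))
      (atTop ⊓ Filter.principal {k : ℕ | Even k}) (nhds 0) := by
  set t := √(1.0242382 * π * exp 1 / (12 * 0.729))
  -- `1.0242382 π e / 12 ≈ 0.72888`: this is where the threshold `0.729` comes from.
  have ht : |t| < 1 := by
    rw [abs_of_nonneg (sqrt_nonneg _), sqrt_lt' one_pos, one_pow, div_lt_one (by norm_num)]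
    nlinarith [pi_lt_d6, exp_one_lt_d9, pi_pos, exp_pos 1]
  set R := (1 - exp (-(2 * π * (y - 0.729))))⁻¹
  have hR : 0 ≤ R := inv_nonneg.2 (sub_nonneg.2 (exp_le_one_iff.2 (by nlinarith [pi_pos])))
  refine squeeze_zero_norm' (a := fun k : ℕ => 2 * R * exp 28.466 * ((k : ℝ) ^ 2 * t ^ k)) ?_ ?_
  · rw [eventually_inf_principal]
    filter_upwards [eventually_ge_atTop 12] with k hk hk_even
    calc _ ≤ 2 * Ck k * ((k / 2) / (2 * π * 0.729 * exp 1)) ^ ((k : ℝ) / 2) * R :=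
          norm_tsum_mul_exp_neg_le _ (by positivity) (by norm_num) hy (hb k hk_even hk)
      _ = 2 * R * (Ck k * ((k / 2) / (2 * π * 0.729 * exp 1)) ^ ((k : ℝ) / 2)) := by ring
      _ ≤ 2 * R * exp 28.466 * ((k : ℝ) ^ 2 * t ^ k) := by
          rw [mul_assoc _ (exp _)]
          exact mul_le_mul_of_nonneg_left (Ck_mul_rpow_le (by norm_num) (by omega)) (by positivity)
  · simpa using ((tendsto_pow_const_mul_const_pow_of_abs_lt_one 2 ht).const_mul
      (2 * R * exp 28.466)).mono_left inf_le_left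
end

section
/- Let n be a positive integer with n ≡ 0 (mod 8) and let S_n ⊆ (ℤ/2)^n be the code spanned by the vectors e_0, …, e_{n/2−1}. Then every codeword of S_n has Hamming weight divisible by 4, i.e. S_n is a doubly even self-dual (type II) code. -/
open Finset

/-- The Hamming weight of a binary word: the number of nonzero entries. -/
def wt {n : ℕ} (c : Fin n → ZMod 2) : ℕ := (Finset.univ.filter fun i => c i ≠ 0).card

/-- The generating vectors `e_0, …, e_{n/2−1}` of the code `S_n` (coordinates indexed by
`j = 0, …, n−1`):  `(e_0)_j = 1` if `j = 0` or `j = n−2`, `(e_0)_j = 0` if `j = 1` or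
`j = n−1`, and `(e_0)_j = j mod 2` otherwise; `(e_1)_j = j mod 2`; and for `k ≥ 2`,
`(e_k)_j = 1` iff `j ∈ {2k−2, 2k−1, n−2, n−1}`. -/
def eVec (n : ℕ) (k : ℕ) : Fin n → ZMod 2 := fun j =>
  if k = 0 then
    if j.val = 0 ∨ j.val = n - 2 then 1
    else if j.val = 1 ∨ j.val = n - 1 then 0
    else (j.val : ZMod 2)
  else if k = 1 then (j.val : ZMod 2)
  else if j.val = 2 * k - 2 ∨ j.val = 2 * k - 1 ∨ j.val = n - 2 ∨ j.val = n - 1 then 1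
  else 0

/-- The code `S_n ⊆ (ℤ/2)^n` spanned by `e_0, …, e_{n/2−1}`. -/
def Scode (n : ℕ) : Submodule (ZMod 2) (Fin n → ZMod 2) :=
  Submodule.span (ZMod 2) (eVec n '' Set.Iio (n / 2))

/-! Write `quadVec n k` for the indicator of `{2k-2, 2k-1, n-2, n-1}`. Then `e_0 = e_1 + quadVec n 1`
and `e_k = quadVec n k` for `k ≥ 2`, so `S_n` lies in the span of `e_1` and the `quadVec n k`.
These words are pairwise orthogonal, of weights `n/2` and `4`. Since
`wt (a + b) = wt a + wt b - 2 |supp a ∩ supp b|` and `a ⬝ᵥ b ≡ |supp a ∩ supp b| (mod 2)`, the sum of two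
orthogonal doubly even words is doubly even, so the whole span is doubly even and self-orthogonal.
Finally the `e_k` have pivots (`e_0`, `e_1`, `e_k` at `0`, `1`, `2k-2`), so `dim S_n = n/2` and
the self-orthogonal `S_n` must equal its dual. -/

open Matrix Module

lemma dotProduct_eq_zero_of_mem_span {R ι : Type*} [CommSemiring R] [Fintype ι]
    {s : Set (ι → R)} (hs : ∀ x ∈ s, ∀ y ∈ s, x ⬝ᵥ y = 0) {x y : ι → R}
    (hx : x ∈ Submodule.span R s) (hy : y ∈ Submodule.span R s) : x ⬝ᵥ y = 0 := by
  induction hx, hy using Submodule.span_induction₂ with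
  | mem_mem x y hx hy => exact hs x hx y hy
  | zero_left => exact zero_dotProduct _
  | zero_right => exact dotProduct_zero _
  | add_left x y z _ _ _ hxz hyz => rw [add_dotProduct, hxz, hyz, add_zero]
  | add_right x y z _ _ _ hxy hxz => rw [dotProduct_add, hxy, hxz, add_zero]
  | smul_left r x y _ _ hxy => rw [smul_dotProduct, hxy, smul_zero]
  | smul_right r x y _ _ hxy => rw [dotProduct_smul, hxy, smul_zero]

section BinaryWeight

variable {n : ℕ}

lemma wt_eq_sum_val (v : Fin n → ZMod 2) : wt v = ∑ j, (v j).val := by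
  rw [wt, card_filter]
  exact sum_congr rfl fun j _ =>
    (by decide : ∀ x : ZMod 2, (if x ≠ 0 then 1 else 0) = x.val) (v j)

lemma dotProduct_eq_natCast_sum_val (a b : Fin n → ZMod 2) :
    a ⬝ᵥ b = ((∑ j, (a j).val * (b j).val : ℕ) : ZMod 2) := by
  simp [dotProduct]

lemma dotProduct_self_eq_wt (a : Fin n → ZMod 2) : a ⬝ᵥ a = wt a := by
  rw [dotProduct_eq_natCast_sum_val, wt_eq_sum_val]
  congr 1
  exact sum_congr rfl fun j _ => (by decide : ∀ x : ZMod 2, x.val * x.val = x.val) (a j)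

lemma wt_add_add_two_mul (a b : Fin n → ZMod 2) :
    wt (a + b) + 2 * ∑ j, (a j).val * (b j).val = wt a + wt b := by
  simp only [wt_eq_sum_val, mul_sum, ← sum_add_distrib, Pi.add_apply]
  exact sum_congr rfl fun j _ =>
    (by decide : ∀ x y : ZMod 2, (x + y).val + 2 * (x.val * y.val) = x.val + y.val) (a j) (b j)

lemma four_dvd_wt_add {a b : Fin n → ZMod 2} (ha : 4 ∣ wt a) (hb : 4 ∣ wt b)
    (hab : a ⬝ᵥ b = 0) : 4 ∣ wt (a + b) := by
  rw [dotProduct_eq_natCast_sum_val, ZMod.natCast_eq_zero_iff] at hab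
  have := wt_add_add_two_mul a b
  omega

lemma four_dvd_wt_of_mem_span {s : Set (Fin n → ZMod 2)} (hwt : ∀ x ∈ s, 4 ∣ wt x)
    (horth : ∀ x ∈ s, ∀ y ∈ s, x ⬝ᵥ y = 0) {c : Fin n → ZMod 2}
    (hc : c ∈ Submodule.span (ZMod 2) s) : 4 ∣ wt c := by
  induction hc using Submodule.span_induction with
  | mem x hx => exact hwt x hx
  | zero => simp [wt]
  | add x y hx hy ihx ihy =>
    exact four_dvd_wt_add ihx ihy (dotProduct_eq_zero_of_mem_span horth hx hy)
  | smul r x _ ih =>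
    obtain rfl | rfl : r = 0 ∨ r = 1 := by revert r; decide
    · simp [wt]
    · rwa [one_smul]

end BinaryWeight

lemma dotProductBilin_nondegenerate {K ι : Type*} [Field K] [Fintype ι] :
    (dotProductBilin K K : LinearMap.BilinForm K (ι → K)).Nondegenerate := by
  classical
  refine ⟨fun v hv => funext fun i => ?_, fun v hv => funext fun i => ?_⟩
  · simpa using hv (Pi.single i 1)
  · simpa using hv (Pi.single i 1)

lemma LinearMap.BilinForm.orthogonal_eq_self {K V : Type*} [Field K] [AddCommGroup V]
    [Module K V] [FiniteDimensional K V] {B : LinearMap.BilinForm K V} (hB : B.Nondegenerate)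
    {W : Submodule K V} (hW : W ≤ B.orthogonal W) (hdim : finrank K V ≤ 2 * finrank K W) :
    B.orthogonal W = W :=
  (Submodule.eq_of_le_of_finrank_le hW (by rw [finrank_orthogonal hB]; omega)).symm

lemma linearIndependent_of_pivots {ι κ R : Type*} [Semiring R] [DecidableEq ι]
    {v : ι → κ → R} (p : ι → κ) (hp : ∀ i j, v i (p j) = if i = j then 1 else 0) :
    LinearIndependent R v := by
  refine LinearIndependent.of_comp (LinearMap.funLeft R R p) ?_
  convert Pi.linearIndependent_single_one ι R using 1
  ext i j
  simp [LinearMap.funLeft, hp, Pi.single_apply, eq_comm]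

lemma coe_eq_setOf_dotProduct_eq_zero {K ι : Type*} [Field K] [Fintype ι]
    {W : Submodule K (ι → K)} (horth : ∀ x ∈ W, ∀ y ∈ W, x ⬝ᵥ y = 0)
    (hdim : Fintype.card ι ≤ 2 * finrank K W) :
    (W : Set (ι → K)) = {v | ∀ c ∈ W, v ⬝ᵥ c = 0} := by
  have hdual : LinearMap.BilinForm.orthogonal (dotProductBilin K K) W = W :=
    LinearMap.BilinForm.orthogonal_eq_self dotProductBilin_nondegenerate
      (fun x hx => LinearMap.BilinForm.mem_orthogonal_iff.2 fun y hy => horth y hy x hx)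
      (by rwa [finrank_pi])
  ext v
  rw [SetLike.mem_coe, ← SetLike.ext_iff.mp hdual v, LinearMap.BilinForm.mem_orthogonal_iff]
  simp [dotProduct_comm]

lemma natCast_zmod_two_eq_ite (m : ℕ) : (m : ZMod 2) = if m % 2 = 0 then 0 else 1 := by
  rw [← ZMod.natCast_mod]
  rcases Nat.mod_two_eq_zero_or_one m with h | h <;> simp [h]

lemma sum_range_two_mul_mod_two (m : ℕ) : ∑ j ∈ range (2 * m), j % 2 = m := by
  induction m with
  | zero => rfl
  | succ m ih =>
    rw [Nat.mul_succ, sum_range_succ, sum_range_succ, ih]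
    omega

def quadVec (n k : ℕ) : Fin n → ZMod 2 := fun j =>
  if j.val = 2 * k - 2 ∨ j.val = 2 * k - 1 ∨ j.val = n - 2 ∨ j.val = n - 1 then 1 else 0

section Generators

variable {n : ℕ}

lemma eVec_one_apply (j : Fin n) : eVec n 1 j = (j.val : ZMod 2) := rfl

lemma eVec_zero (h2 : 2 ∣ n) : eVec n 0 = eVec n 1 + quadVec n 1 := by
  ext j
  simp only [eVec, quadVec, Pi.add_apply, natCast_zmod_two_eq_ite, one_ne_zero, if_false]
  split_ifs <;> first | rfl | decide | omega

lemma eVec_of_two_le {k : ℕ} (hk : 2 ≤ k) : eVec n k = quadVec n k := by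
  ext j
  simp only [eVec, quadVec, if_neg (show k ≠ 0 by omega), if_neg (show k ≠ 1 by omega)]

lemma eVec_pivot (h2 : 2 ∣ n) {k l : ℕ} (hk : k < n / 2) (hl : l < n / 2) :
    eVec n l ⟨if k ≤ 1 then k else 2 * k - 2, by split_ifs <;> omega⟩ = if l = k then 1 else 0 := by
  simp only [eVec, natCast_zmod_two_eq_ite]
  split_ifs <;> first | rfl | decide | omega

lemma wt_eVec_one (h2 : 2 ∣ n) : wt (eVec n 1) = n / 2 := by
  simp only [wt_eq_sum_val, eVec_one_apply, ZMod.val_natCast]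
  rw [Fin.sum_univ_eq_sum_range (· % 2), ← sum_range_two_mul_mod_two (n / 2),
    Nat.mul_div_cancel' h2]

lemma quadVec_eq_sum_single {k : ℕ} (hk : 1 ≤ k) (hkn : 2 * k + 1 < n) :
    quadVec n k = Pi.single ⟨2 * k - 2, by omega⟩ 1 + Pi.single ⟨2 * k - 1, by omega⟩ 1 +
      Pi.single ⟨n - 2, by omega⟩ 1 + Pi.single ⟨n - 1, by omega⟩ 1 := by
  ext j
  simp only [quadVec, Pi.add_apply, Pi.single_apply, Fin.ext_iff]
  split_ifs <;> first | decide | omega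

lemma dotProduct_quadVec {k : ℕ} (hk : 1 ≤ k) (hkn : 2 * k + 1 < n) (v : Fin n → ZMod 2) :
    v ⬝ᵥ quadVec n k = v ⟨2 * k - 2, by omega⟩ + v ⟨2 * k - 1, by omega⟩ +
      v ⟨n - 2, by omega⟩ + v ⟨n - 1, by omega⟩ := by
  simp only [quadVec_eq_sum_single hk hkn, dotProduct_add, dotProduct_single, mul_one]

lemma wt_quadVec {k : ℕ} (hk : 1 ≤ k) (hkn : 2 * k + 1 < n) : wt (quadVec n k) = 4 := by
  have hsupp : univ.filter (fun j => quadVec n k j ≠ 0) = {⟨2 * k - 2, by omega⟩,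
      ⟨2 * k - 1, by omega⟩, ⟨n - 2, by omega⟩, ⟨n - 1, by omega⟩} := by
    ext j
    rw [mem_filter_univ]
    simp only [quadVec, mem_insert, mem_singleton, Fin.ext_iff]
    split_ifs with h <;> simp [h]
  rw [wt, hsupp]
  refine card_eq_four.2 ⟨_, _, _, _, ?_, ?_, ?_, ?_, ?_, ?_, rfl⟩ <;>
    (simp only [ne_eq, Fin.mk.injEq]; omega)

lemma eVec_one_dotProduct_quadVec (h2 : 2 ∣ n) {k : ℕ} (hk : 1 ≤ k) (hkn : 2 * k + 1 < n) :
    eVec n 1 ⬝ᵥ quadVec n k = 0 := by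
  simp only [dotProduct_quadVec hk hkn, eVec_one_apply, ← Nat.cast_add, ZMod.natCast_eq_zero_iff]
  omega

lemma quadVec_dotProduct_quadVec {k l : ℕ} (hk : 1 ≤ k) (hkn : 2 * k + 1 < n) (hl : 1 ≤ l)
    (hln : 2 * l + 1 < n) :
    quadVec n l ⬝ᵥ quadVec n k = 0 := by
  simp only [dotProduct_quadVec hk hkn, quadVec, or_true, true_or, ↓reduceIte]
  split_ifs <;> first | decide | omega

def quadGens (n : ℕ) : Set (Fin n → ZMod 2) :=
  insert (eVec n 1) (quadVec n '' Set.Ico 1 (n / 2))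

lemma Scode_le_span_quadGens (h4 : 4 ∣ n) : Scode n ≤ Submodule.span (ZMod 2) (quadGens n) := by
  rw [Scode, Submodule.span_le]
  rintro _ ⟨k, hk, rfl⟩
  have hk : k < n / 2 := hk
  rcases Nat.lt_trichotomy k 1 with hk0 | rfl | hk2
  · rw [Nat.lt_one_iff.1 hk0, eVec_zero (by omega)]
    exact add_mem (Submodule.subset_span (Set.mem_insert _ _))
      (Submodule.subset_span (Set.mem_insert_of_mem _ ⟨1, ⟨le_rfl, by omega⟩, rfl⟩))
  · exact Submodule.subset_span (Set.mem_insert _ _)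
  · rw [eVec_of_two_le hk2]
    exact Submodule.subset_span (Set.mem_insert_of_mem _ ⟨k, ⟨hk2.le, hk⟩, rfl⟩)

lemma four_dvd_wt_of_mem_quadGens (h8 : 8 ∣ n) : ∀ x ∈ quadGens n, 4 ∣ wt x := by
  rintro _ (rfl | ⟨k, ⟨hk, hkn⟩, rfl⟩)
  · rw [wt_eVec_one (by omega)]
    omega
  · rw [wt_quadVec hk (by omega)]

lemma quadGens_pairwise_orthogonal (h4 : 4 ∣ n) :
    ∀ x ∈ quadGens n, ∀ y ∈ quadGens n, x ⬝ᵥ y = 0 := by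
  rintro _ (rfl | ⟨k, ⟨hk, hkn⟩, rfl⟩) _ (rfl | ⟨l, ⟨hl, hln⟩, rfl⟩)
  · rw [dotProduct_self_eq_wt, wt_eVec_one (by omega), ZMod.natCast_eq_zero_iff]
    omega
  · exact eVec_one_dotProduct_quadVec (by omega) hl (by omega)
  · rw [dotProduct_comm]
    exact eVec_one_dotProduct_quadVec (by omega) hk (by omega)
  · exact quadVec_dotProduct_quadVec hl (by omega) hk (by omega)

lemma finrank_Scode (h2 : 2 ∣ n) : finrank (ZMod 2) (Scode n) = n / 2 := by
  have hli : LinearIndependent (ZMod 2) (eVec n ∘ (Fin.val : Fin (n / 2) → ℕ)) :=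
    linearIndependent_of_pivots
      (fun k => ⟨if k.val ≤ 1 then k.val else 2 * k.val - 2, by split_ifs <;> omega⟩)
      (fun l k => by simp only [Function.comp_apply, eVec_pivot h2 k.isLt l.isLt, Fin.ext_iff])
  rw [Scode, ← Fin.range_val, ← Set.range_comp, finrank_span_eq_card hli, Fintype.card_fin]

end Generators

theorem Scode_typeII_general (n : ℕ) (h8 : n % 8 = 0) :
    (∀ c ∈ Scode n, 4 ∣ wt c) ∧
    (Scode n : Set (Fin n → ZMod 2)) =
      {v : Fin n → ZMod 2 | ∀ c ∈ Scode n, ∑ j, v j * c j = 0} := by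
  have hdvd : 8 ∣ n := Nat.dvd_of_mod_eq_zero h8
  have hspan := Scode_le_span_quadGens (n := n) (by omega)
  have horth := quadGens_pairwise_orthogonal (n := n) (by omega)
  refine ⟨fun c hc => four_dvd_wt_of_mem_span (four_dvd_wt_of_mem_quadGens hdvd) horth (hspan hc),
    coe_eq_setOf_dotProduct_eq_zero
      (fun x hx y hy => dotProduct_eq_zero_of_mem_span horth (hspan hx) (hspan hy)) ?_⟩
  rw [Fintype.card_fin, finrank_Scode (by omega)]
  omega

/-- For `n ≡ 0 (mod 8)`, every codeword of `S_n` has Hamming weight divisible by 4, and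
`S_n = S_n⊥`; i.e. `S_n` is a doubly even self-dual (type II) code. -/
theorem Scode_typeII (n : ℕ) (hn : 0 < n) (h8 : n % 8 = 0) :
    (∀ c ∈ Scode n, 4 ∣ wt c) ∧
    (Scode n : Set (Fin n → ZMod 2)) =
      {v : Fin n → ZMod 2 | ∀ c ∈ Scode n, ∑ j, v j * c j = 0} :=
  Scode_typeII_general n h8
end

section
/- Let n ≡ 0 (mod 4) and let S_n ⊆ (ℤ/2)^n be the code spanned by e_0, …, e_{n/2−1}. Then the weight enumerator of S_n satisfies the polynomial identity ∑_{c ∈ S_n} X^{n − wt(c)} Y^{wt(c)} = (1/2)·((X² − Y²)^{n/2} + (X² + Y²)^{n/2}) + 2^{n/2−1} (XY)^{n/2}. -/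
open Finset

/-!
Read a word of length `n = 2m` as `m` consecutive pairs. Then `S_n` consists exactly of the
words whose pairs are `(a_q, a_q + ε)` for a single `ε ∈ 𝔽₂` and an even-weight `a ∈ 𝔽₂^m`:
`e_1` is the word with `ε = 1, a = 0`, while `e_0 + e_1` and `e_k` (`k ≥ 2`) have `ε = 0` and
`a` supported on `{0, m-1}`, resp. `{k-1, m-1}`. For `ε = 1` every pair contributes `XY`, which
gives `2^(m-1) (XY)^m`. For `ε = 0` each pair contributes `X²` or `Y²`, and averaging over the
sign character `s ↦ (-1)^s` cuts the sum down to even-weight `a`, which gives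
`((X² + Y²)^m + (X² - Y²)^m) / 2`.
-/

lemma ZMod.two_eq_zero : (2 : ZMod 2) = 0 := rfl

section Parity

variable {R : Type*} [CommRing R]

lemma ZMod.sum_univ_two (F : ZMod 2 → R) : ∑ s, F s = F 0 + F 1 := Fin.sum_univ_two F

lemma neg_one_pow_val_sum {ι : Type*} (s : Finset ι) (b : ι → ZMod 2) :
    (-1 : R) ^ (∑ i ∈ s, b i).val = ∏ i ∈ s, (-1 : R) ^ (b i).val := by
  have hval : (∑ i ∈ s, b i).val = (∑ i ∈ s, (b i).val) % 2 := by
    rw [← ZMod.val_natCast, Nat.cast_sum]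
    simp
  rw [hval, ← neg_one_pow_eq_pow_mod_two, prod_pow_eq_pow_sum]

lemma two_mul_eq_add_mul_neg_one_pow (F : ZMod 2 → R) (s : ZMod 2) :
    2 * F s = (F 0 + F 1) + (F 0 - F 1) * (-1) ^ s.val := by
  obtain rfl | rfl : s = 0 ∨ s = 1 := by revert s; decide
  · rw [ZMod.val_zero]; ring
  · rw [ZMod.val_one]; ring

lemma sum_prod_eq_pow (F : ZMod 2 → R) (p : ℕ) :
    ∑ b : Fin p → ZMod 2, ∏ i, F (b i) = (F 0 + F 1) ^ p := by
  rw [← ZMod.sum_univ_two, Fintype.sum_pow]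

lemma two_mul_sum_prod_mul_sum (F : ZMod 2 → R) (p : ℕ) :
    2 * ∑ b : Fin p → ZMod 2, (∏ i, F (b i)) * F (∑ i, b i) =
      (F 0 + F 1) ^ (p + 1) + (F 0 - F 1) ^ (p + 1) := by
  have hsign := sum_prod_eq_pow (fun s => F s * (-1) ^ s.val) p
  rw [ZMod.val_zero, ZMod.val_one] at hsign
  calc 2 * ∑ b : Fin p → ZMod 2, (∏ i, F (b i)) * F (∑ i, b i)
      = ∑ b : Fin p → ZMod 2, (∏ i, F (b i)) * (2 * F (∑ i, b i)) := by
        rw [mul_sum]; simp only [mul_left_comm]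
    _ = (F 0 + F 1) * ∑ b : Fin p → ZMod 2, ∏ i, F (b i) +
          (F 0 - F 1) * ∑ b : Fin p → ZMod 2, ∏ i, (F (b i) * (-1) ^ (b i).val) := by
        rw [mul_sum, mul_sum, ← sum_add_distrib]
        refine sum_congr rfl fun b _ => ?_
        rw [two_mul_eq_add_mul_neg_one_pow F, neg_one_pow_val_sum, prod_mul_distrib]
        ring
    _ = (F 0 + F 1) ^ (p + 1) + (F 0 - F 1) ^ (p + 1) := by
        rw [sum_prod_eq_pow, hsign]; ring

end Parity

section PairCode

variable {R : Type*} [CommRing R]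

def parityExtend (p : ℕ) : (Fin p → R) →ₗ[R] (Fin (p + 1) → R) where
  toFun b := Fin.snoc b (∑ i, b i)
  map_add' b b' := by
    ext q
    induction q using Fin.lastCases <;> simp [sum_add_distrib]
  map_smul' c b := by
    ext q
    induction q using Fin.lastCases <;> simp [mul_sum]

@[simp]
lemma parityExtend_last (p : ℕ) (b : Fin p → R) : parityExtend p b (Fin.last p) = ∑ i, b i := by
  simp [parityExtend]

@[simp]
lemma parityExtend_castSucc (p : ℕ) (b : Fin p → R) (i : Fin p) :
    parityExtend p b i.castSucc = b i := by
  simp [parityExtend]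

lemma parityExtend_injective (p : ℕ) : Function.Injective (parityExtend (R := R) p) :=
  fun b b' h => funext fun i => by simpa using congrFun h i.castSucc

lemma parityExtend_single (p : ℕ) (i : Fin p) :
    parityExtend p (Pi.single i (1 : R)) =
      Pi.single i.castSucc 1 + Pi.single (Fin.last p) 1 := by
  ext q
  induction q using Fin.lastCases <;> simp [Pi.single_apply, Fin.castSucc_ne_last]

lemma prod_parityExtend {M : Type*} [CommMonoid M] {p : ℕ} (F : R → M) (b : Fin p → R) :
    ∏ q, F (parityExtend p b q) = (∏ i, F (b i)) * F (∑ i, b i) := by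
  simp [Fin.prod_univ_castSucc]

/-- `pairDouble m (ε, a)` is the word `(a₀, a₀ + ε, a₁, a₁ + ε, …)`; position `2q + r` holds
`a_q + ε r`. -/
def pairDouble (m : ℕ) : R × (Fin m → R) →ₗ[R] (Fin (m * 2) → R) where
  toFun x j := x.2 (finProdFinEquiv.symm j).1 + x.1 * (finProdFinEquiv.symm j).2.val
  map_add' x y := by ext j; simp; ring
  map_smul' c x := by ext j; simp; ring

@[simp]
lemma pairDouble_apply (m : ℕ) (x : R × (Fin m → R)) (q : Fin m) (r : Fin 2) :
    pairDouble m x (finProdFinEquiv (q, r)) = x.2 q + x.1 * r.val := by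
  simp only [pairDouble, LinearMap.coe_mk, AddHom.coe_mk, Equiv.symm_apply_apply]

lemma pairDouble_injective {m : ℕ} (hm : 0 < m) :
    Function.Injective (pairDouble (R := R) m) := by
  rw [← LinearMap.ker_eq_bot, Submodule.eq_bot_iff]
  rintro ⟨ε, a⟩ hx
  rw [LinearMap.mem_ker] at hx
  obtain rfl : a = 0 := funext fun q => by simpa using congrFun hx (finProdFinEquiv (q, 0))
  simpa using congrFun hx (finProdFinEquiv (⟨0, hm⟩, 1))

end PairCode

def pairWord (p : ℕ) : ZMod 2 × (Fin p → ZMod 2) →ₗ[ZMod 2] (Fin ((p + 1) * 2) → ZMod 2) :=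
  pairDouble (p + 1) ∘ₗ LinearMap.id.prodMap (parityExtend p)

lemma pairWord_injective {p : ℕ} : Function.Injective (pairWord p) :=
  (pairDouble_injective p.succ_pos).comp
    (Function.injective_id.prodMap (parityExtend_injective p))

lemma pairWord_one_zero (p : ℕ) : pairWord p (1, 0) = eVec ((p + 1) * 2) 1 := by
  ext j
  obtain ⟨⟨q, r⟩, rfl⟩ := finProdFinEquiv.surjective j
  fin_cases r <;> simp [pairWord, eVec, ZMod.two_eq_zero]

lemma pairWord_zero_single (p : ℕ) (i : Fin p) (hi : 0 < i.val) :
    pairWord p (0, Pi.single i 1) = eVec ((p + 1) * 2) (i.val + 1) := by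
  ext j
  obtain ⟨⟨q, r⟩, rfl⟩ := finProdFinEquiv.surjective j
  have := i.isLt
  induction q using Fin.lastCases <;> fin_cases r <;>
    simp [pairWord, eVec, parityExtend_single, Pi.single_apply, Fin.ext_iff, ZMod.two_eq_zero] <;>
    (try split_ifs) <;> first | rfl | omega

lemma pairWord_zero_single_zero (p : ℕ) (hp : 0 < p) :
    pairWord p (0, Pi.single ⟨0, hp⟩ 1) = eVec ((p + 1) * 2) 0 + eVec ((p + 1) * 2) 1 := by
  ext j
  obtain ⟨⟨q, r⟩, rfl⟩ := finProdFinEquiv.surjective j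
  induction q using Fin.lastCases <;> fin_cases r <;>
    simp [pairWord, eVec, parityExtend_single, Pi.single_apply, Fin.ext_iff, ZMod.two_eq_zero] <;>
    (try split_ifs) <;> first | rfl | omega

lemma eVec_mem_Scode {n k : ℕ} (hk : k < n / 2) : eVec n k ∈ Scode n :=
  Submodule.subset_span ⟨k, hk, rfl⟩

lemma Scode_le_range_pairWord (p : ℕ) (hp : 0 < p) :
    Scode ((p + 1) * 2) ≤ LinearMap.range (pairWord p) := by
  rw [Scode, Submodule.span_le]
  rintro _ ⟨k, hk, rfl⟩
  rcases k with _ | _ | k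
  · have h01 : eVec ((p + 1) * 2) 0 + eVec ((p + 1) * 2) 1 ∈ LinearMap.range (pairWord p) :=
      ⟨_, pairWord_zero_single_zero p hp⟩
    have h1 : eVec ((p + 1) * 2) 1 ∈ LinearMap.range (pairWord p) := ⟨_, pairWord_one_zero p⟩
    simpa using sub_mem h01 h1
  · exact ⟨_, pairWord_one_zero p⟩
  · simp only [Set.mem_Iio] at hk
    exact ⟨_, pairWord_zero_single p ⟨k + 1, by omega⟩ k.succ_pos⟩

lemma pairWord_zero_single_mem_Scode {p : ℕ} (i : Fin p) :
    pairWord p (0, Pi.single i 1) ∈ Scode ((p + 1) * 2) := by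
  have hp : 0 < p := Fin.pos i
  rcases Nat.eq_zero_or_pos i.val with hi | hi
  · obtain rfl : i = ⟨0, hp⟩ := Fin.ext hi
    rw [pairWord_zero_single_zero]
    exact add_mem (eVec_mem_Scode (by omega)) (eVec_mem_Scode (by omega))
  · rw [pairWord_zero_single p i hi]
    exact eVec_mem_Scode (by omega)

lemma range_pairWord_le_Scode (p : ℕ) (hp : 0 < p) :
    LinearMap.range (pairWord p) ≤ Scode ((p + 1) * 2) := by
  rintro _ ⟨⟨ε, b⟩, rfl⟩
  have hdecomp : (ε, b) = ε • ((1 : ZMod 2), (0 : Fin p → ZMod 2)) +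
      ∑ i, b i • ((0 : ZMod 2), Pi.single i (1 : ZMod 2)) := by
    ext i <;> simp [Prod.fst_sum, Prod.snd_sum, Pi.single_apply]
  rw [hdecomp, map_add, map_smul, map_sum, pairWord_one_zero]
  refine add_mem (Submodule.smul_mem _ _ (eVec_mem_Scode (by omega))) (Submodule.sum_mem _ ?_)
  intro i _
  rw [map_smul]
  exact Submodule.smul_mem _ _ (pairWord_zero_single_mem_Scode i)

lemma Scode_eq_range_pairWord (p : ℕ) (hp : 0 < p) :
    Scode ((p + 1) * 2) = LinearMap.range (pairWord p) :=
  le_antisymm (Scode_le_range_pairWord p hp) (range_pairWord_le_Scode p hp)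

def letterWeight {M : Type*} (X Y : M) (s : ZMod 2) : M := if s = 0 then X else Y

lemma pow_sub_wt_mul_pow_wt {M : Type*} [CommMonoid M] {N : ℕ} (c : Fin N → ZMod 2)
    (X Y : M) :
    X ^ (N - wt c) * Y ^ wt c = ∏ j, letterWeight X Y (c j) := by
  have hcard := card_filter_add_card_filter_not (s := univ) (fun j => c j = 0)
  rw [card_univ, Fintype.card_fin] at hcard
  simp only [letterWeight]
  rw [prod_ite, prod_const, prod_const, wt]
  simp only [ne_eq]
  congr 2
  omega

lemma prod_letterWeight_pairDouble {M : Type*} [CommMonoid M] {m : ℕ}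
    (x : ZMod 2 × (Fin m → ZMod 2)) (X Y : M) :
    ∏ j, letterWeight X Y (pairDouble m x j) =
      ∏ q, letterWeight X Y (x.2 q) * letterWeight X Y (x.2 q + x.1) := by
  rw [← finProdFinEquiv.prod_comp, Fintype.prod_prod_type]
  simp [Fin.prod_univ_two]

lemma two_mul_sum_prod_letterWeight_pairWord_zero {R : Type*} [CommRing R] (X Y : R) (p : ℕ) :
    2 * ∑ b, ∏ j, letterWeight X Y (pairWord p (0, b) j) =
      (X ^ 2 + Y ^ 2) ^ (p + 1) + (X ^ 2 - Y ^ 2) ^ (p + 1) := by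
  simp only [pairWord, LinearMap.comp_apply, LinearMap.prodMap_apply, LinearMap.id_apply,
    prod_letterWeight_pairDouble, add_zero]
  set F : ZMod 2 → R := fun s => letterWeight X Y s * letterWeight X Y s
  rw [sum_congr rfl fun b _ => prod_parityExtend F b]
  refine (two_mul_sum_prod_mul_sum F p).trans ?_
  simp [F, letterWeight, sq]

lemma sum_prod_letterWeight_pairWord_one {M : Type*} [CommSemiring M] (X Y : M) (p : ℕ) :
    ∑ b, ∏ j, letterWeight X Y (pairWord p (1, b) j) = 2 ^ p * (X * Y) ^ (p + 1) := by
  have hpair : ∀ s : ZMod 2, letterWeight X Y s * letterWeight X Y (s + 1) = X * Y := by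
    intro s
    obtain rfl | rfl : s = 0 ∨ s = 1 := by revert s; decide
    · simp [letterWeight]
    · simp [letterWeight, mul_comm, one_add_one_eq_two, ZMod.two_eq_zero]
  simp [pairWord, prod_letterWeight_pairDouble, hpair]

/-- For `n ≡ 0 (mod 4)`, the weight enumerator of `S_n` satisfies
`∑_{c ∈ S_n} X^{n−wt(c)} Y^{wt(c)}
  = (1/2)((X²−Y²)^{n/2} + (X²+Y²)^{n/2}) + 2^{n/2−1}(XY)^{n/2}` for all real `X`, `Y`. -/
theorem Scode_weight_enumerator (n : ℕ) (hn : 0 < n) (h4 : n % 4 = 0) (X Y : ℝ) :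
    ∑' c : (Scode n), X ^ (n - wt (c : Fin n → ZMod 2)) * Y ^ wt (c : Fin n → ZMod 2) =
      (1 / 2) * ((X ^ 2 - Y ^ 2) ^ (n / 2) + (X ^ 2 + Y ^ 2) ^ (n / 2)) +
        2 ^ (n / 2 - 1) * (X * Y) ^ (n / 2) := by
  obtain ⟨p, hp, rfl⟩ : ∃ p, 0 < p ∧ n = (p + 1) * 2 := ⟨n / 2 - 1, by omega, by omega⟩
  rw [Scode_eq_range_pairWord p hp,
    ← (LinearEquiv.ofInjective _ pairWord_injective).toEquiv.tsum_eq, tsum_fintype]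
  simp only [LinearEquiv.coe_toEquiv, LinearEquiv.ofInjective_apply, pow_sub_wt_mul_pow_wt]
  rw [Fintype.sum_prod_type, ZMod.sum_univ_two, sum_prod_letterWeight_pairWord_one,
    show (p + 1) * 2 / 2 = p + 1 by omega, Nat.add_sub_cancel]
  linarith [two_mul_sum_prod_letterWeight_pairWord_zero X Y p]
end

section
/- Let r ≥ 1 and 0 < α < 1 be reals with r·α < 1. Suppose for each n we are given non-negative reals A_{n,0}, …, A_{n,n} with A_{n,0} ≥ 1 and A_{n,k} ≤ c_n · r^{min(k, n−k)} for all 0 ≤ k ≤ n, where c_n ≥ 1 and (1/n) log c_n → 0 as n → ∞. Then (1/n) · log( ∑_{k=0}^n A_{n,k} α^k ) → 0 as n → ∞. -/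
/-!
The sum is at least its `k = 0` term `A_{n,0} ≥ 1`. Since `r ≥ 1`, `r^{min(k, n−k)} ≤ r^k`, so the
sum is at most `c_n ∑ (rα)^k ≤ c_n / (1 − rα)`. Hence `(1/n) log` of it is squeezed between `0` and
`(1/n) log c_n + (1/n) log (1 − rα)⁻¹ → 0`.
-/

open Filter Finset Real

lemma geom_sum_le_inv_one_sub {x : ℝ} (hx0 : 0 ≤ x) (hx1 : x < 1) (m : ℕ) :
    ∑ i ∈ range m, x ^ i ≤ (1 - x)⁻¹ := by
  have h := geom_sum_Ico_le_of_lt_one (m := 0) (n := m) hx0 hx1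
  rwa [← range_eq_Ico, pow_zero, one_div] at h

lemma sum_mul_pow_le_of_le_mul_pow {a : ℕ → ℝ} {c r α : ℝ} {n : ℕ} (hc : 0 ≤ c) (hα : 0 ≤ α)
    (hrα0 : 0 ≤ r * α) (hrα1 : r * α < 1) (ha : ∀ k ≤ n, a k ≤ c * r ^ k) :
    ∑ k ∈ range (n + 1), a k * α ^ k ≤ c * (1 - r * α)⁻¹ :=
  calc ∑ k ∈ range (n + 1), a k * α ^ k ≤ ∑ k ∈ range (n + 1), c * (r * α) ^ k := by
        refine sum_le_sum fun k hk => ?_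
        rw [mul_pow, ← mul_assoc]
        exact mul_le_mul_of_nonneg_right (ha k (Nat.lt_succ_iff.mp (mem_range.mp hk)))
          (pow_nonneg hα k)
    _ = c * ∑ k ∈ range (n + 1), (r * α) ^ k := (mul_sum ..).symm
    _ ≤ c * (1 - r * α)⁻¹ := mul_le_mul_of_nonneg_left (geom_sum_le_inv_one_sub hrα0 hrα1 _) hc

lemma tendsto_inv_mul_log_of_one_le_of_le_mul_const {S c : ℕ → ℝ} {C : ℝ} (hC : 0 < C)
    (hS : ∀ n, 1 ≤ S n) (hSc : ∀ n, S n ≤ c n * C)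
    (hc : Tendsto (fun n : ℕ => (1 / (n : ℝ)) * log (c n)) atTop (nhds 0)) :
    Tendsto (fun n : ℕ => (1 / (n : ℝ)) * log (S n)) atTop (nhds 0) := by
  have hlower (n : ℕ) : 0 ≤ (1 / (n : ℝ)) * log (S n) :=
    mul_nonneg (by positivity) (log_nonneg (hS n))
  have hupper (n : ℕ) :
      (1 / (n : ℝ)) * log (S n) ≤ (1 / (n : ℝ)) * log (c n) + (1 / (n : ℝ)) * log C := by
    have hcn : 0 < c n := pos_of_mul_pos_left (by linarith [hS n, hSc n]) hC.le
    rw [← mul_add, ← log_mul hcn.ne' hC.ne']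
    exact mul_le_mul_of_nonneg_left (log_le_log (by linarith [hS n]) (hSc n)) (by positivity)
  have hbound : Tendsto (fun n : ℕ => (1 / (n : ℝ)) * log (c n) + (1 / (n : ℝ)) * log C)
      atTop (nhds 0) := by
    simpa using hc.add (tendsto_one_div_atTop_nhds_zero_nat.mul_const (log C))
  exact tendsto_of_tendsto_of_tendsto_of_le_of_le tendsto_const_nhds hbound hlower hupper

theorem BEC_free_energy_low_temperature_general (r α : ℝ) (hr : 1 ≤ r) (hα0 : 0 < α)
    (hrα : r * α < 1)
    (A : ℕ → ℕ → ℝ) (c : ℕ → ℝ)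
    (hA0 : ∀ n : ℕ, 1 ≤ A n 0)
    (hAnonneg : ∀ n : ℕ, ∀ k ≤ n, 0 ≤ A n k)
    (hAle : ∀ n : ℕ, ∀ k ≤ n, A n k ≤ c n * r ^ (min k (n - k)))
    (hclim : Tendsto (fun n : ℕ => (1 / (n : ℝ)) * Real.log (c n)) atTop (nhds 0)) :
    Tendsto (fun n : ℕ =>
        (1 / (n : ℝ)) * Real.log (∑ k ∈ Finset.range (n + 1), A n k * α ^ k))
      atTop (nhds 0) := by
  have hc (n : ℕ) : 1 ≤ c n := by simpa using (hA0 n).trans (hAle n 0 (Nat.zero_le n))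
  refine tendsto_inv_mul_log_of_one_le_of_le_mul_const (inv_pos.2 (sub_pos.2 hrα))
    (fun n => ?_) (fun n => ?_) hclim
  · calc 1 ≤ A n 0 * α ^ 0 := by simpa using hA0 n
      _ ≤ ∑ k ∈ range (n + 1), A n k * α ^ k :=
        single_le_sum (f := fun k => A n k * α ^ k)
          (fun k hk => mul_nonneg (hAnonneg n k (Nat.lt_succ_iff.mp (mem_range.mp hk)))
            (pow_nonneg hα0.le k)) (by simp)
  · refine sum_mul_pow_le_of_le_mul_pow (by linarith [hc n]) hα0.le (by positivity) hrα
      fun k hk => (hAle n k hk).trans ?_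
    exact mul_le_mul_of_nonneg_left (pow_le_pow_right₀ hr (min_le_left _ _)) (by linarith [hc n])

/-- Let `r ≥ 1` and `0 < α < 1` with `r·α < 1`.  If `A_{n,0}, …, A_{n,n}` are non-negative
reals with `A_{n,0} ≥ 1` and `A_{n,k} ≤ c_n · r^{min(k, n−k)}` where `c_n ≥ 1` and
`(1/n) log c_n → 0`, then `(1/n) log(∑_{k=0}^n A_{n,k} α^k) → 0` as `n → ∞`. -/
theorem BEC_free_energy_low_temperature (r α : ℝ) (hr : 1 ≤ r) (hα0 : 0 < α)
    (hα1 : α < 1) (hrα : r * α < 1)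
    (A : ℕ → ℕ → ℝ) (c : ℕ → ℝ)
    (hA0 : ∀ n : ℕ, 1 ≤ A n 0)
    (hAnonneg : ∀ n : ℕ, ∀ k ≤ n, 0 ≤ A n k)
    (hAle : ∀ n : ℕ, ∀ k ≤ n, A n k ≤ c n * r ^ (min k (n - k)))
    (hc : ∀ n : ℕ, 1 ≤ c n)
    (hclim : Tendsto (fun n : ℕ => (1 / (n : ℝ)) * Real.log (c n)) atTop (nhds 0)) :
    Tendsto (fun n : ℕ =>
        (1 / (n : ℝ)) * Real.log (∑ k ∈ Finset.range (n + 1), A n k * α ^ k))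
      atTop (nhds 0) :=
  BEC_free_energy_low_temperature_general r α hr hα0 hrα A c hA0 hAnonneg hAle hclim
end
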